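/- arXiv:1811.08880 — 2 statements merged into one kernel-verified Lean document; each statement's English description precedes it below -/
import Mathlib

section
/- Let S = S₁ × ⋯ × S_M, O = O₁ × ⋯ × O_M be products of finite types and A finite. Suppose (μ^t_s, μ^t_{sa}, μ^t_{soa}) is a feasible solution of the exact flow constraints on S, O, A: μ^{t+1}_{s'} = ∑_{s,a} p(s'|s,a) μ^t_{sa}, μ^t_{sa} = ∑_o μ^t_{soa}, ∑_a μ^t_{soa} = p(o|s)μ^t_s, μ^1_s = p₁(s), all variables nonnegative, where the probabilities factorize across components: p(s'|s,a) = ∏_m p_m(s'_m|s_m,a), p(o|s) = ∏_m p_m(o_m|s_m), p₁(s) = ∏_m p_m(s_m). Define component marginals τ^{t,m}_s = ∑_{s̄ : s̄_m = s} μ^t_{s̄}, τ^{t,m}_{sa} = ∑_{s̄ : s̄_m = s} μ^t_{s̄a}, τ^{t,m}_{soa} = ∑_{s̄, ō : s̄_m = s, ō_m = o} μ^t_{s̄ōa}, and τ^t_a = ∑_{s̄} μ^t_{s̄a}. Then τ satisfies the fluid LP constraints: τ^{t+1,m}_{s'} = ∑_{s,a} p_m(s'|s,a) τ^{t,m}_{sa},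 τ^{t,m}_{sa} = ∑_o τ^{t,m}_{soa}, ∑_s τ^{t,m}_{sa} = τ^t_a, ∑_a τ^{t,m}_{soa} = p_m(o|s)·τ^{t,m}_s, and τ^{1,m}_s = p_m(s). -/
open Finset

lemma fiber_prod_sum {M : ℕ} {S : Fin M → Type*} [∀ m, Fintype (S m)]
    [∀ m, DecidableEq (S m)]
    (f : ∀ m, S m → ℝ) (m : Fin M) (x : S m) (h1 : ∀ m', m' ≠ m → ∑ x, f m' x = 1) :
    ∑ s ∈ Finset.univ.filter (fun s : ∀ m, S m => s m = x), ∏ m', f m' (s m') = f m x := by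
  classical
  set g : ∀ m', S m' → ℝ := fun m' y =>
    if h : m' = m then (if h ▸ y = x then f m' y else 0) else f m' y with hg
  have hprod : ∀ s : ∀ m', S m',
      ∏ m', g m' (s m') = if s m = x then ∏ m', f m' (s m') else 0 := by
    intro s
    by_cases hx : s m = x
    · simp only [hx, if_true]
      refine Finset.prod_congr rfl fun m' _ => ?_
      by_cases h : m' = m
      · subst h; simp [hg, hx]
      · simp [hg, h]
    · simp only [hx, if_false]
      exact Finset.prod_eq_zero (Finset.mem_univ m) (by simp [hg, hx])
  rw [Finset.sum_filter]
  calc ∑ s : ∀ m', S m', (if s m = x then ∏ m', f m' (s m') else 0)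
      = ∑ s : ∀ m', S m', ∏ m', g m' (s m') :=
        Finset.sum_congr rfl fun s _ => (hprod s).symm
    _ = ∏ m', ∑ y, g m' y := by
        rw [Finset.prod_univ_sum, Fintype.piFinset_univ]
    _ = f m x := by
        rw [Finset.prod_eq_single m]
        · simp [hg]
        · intro m' _ h; simp [hg, h, h1 m' h]
        · simp

theorem stmt7 {M : ℕ} (S O : Fin M → Type*) (A : Type*)
    [∀ m, Fintype (S m)] [∀ m, Fintype (O m)] [Fintype A]
    [∀ m, DecidableEq (S m)] [∀ m, DecidableEq (O m)]
    (pm1 : (m : Fin M) → S m → ℝ)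
    (pmo : (m : Fin M) → O m → S m → ℝ)
    (pmt : (m : Fin M) → S m → S m → A → ℝ)
    (hpm10 : ∀ m x, 0 ≤ pm1 m x) (hpm11 : ∀ m, ∑ x, pm1 m x = 1)
    (hpmo0 : ∀ m o x, 0 ≤ pmo m o x) (hpmo1 : ∀ m x, ∑ o, pmo m o x = 1)
    (hpmt0 : ∀ m x' x a, 0 ≤ pmt m x' x a) (hpmt1 : ∀ m x a, ∑ x', pmt m x' x a = 1)
    (μS : ℕ → (∀ m, S m) → ℝ)
    (μSA : ℕ → (∀ m, S m) → A → ℝ)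
    (μSOA : ℕ → (∀ m, S m) → (∀ m, O m) → A → ℝ)
    (hpos1 : ∀ t s, 0 ≤ μS t s) (hpos2 : ∀ t s a, 0 ≤ μSA t s a)
    (hpos3 : ∀ t s o a, 0 ≤ μSOA t s o a)
    (hflow : ∀ t s', μS (t + 1) s'
        = ∑ s, ∑ a, (∏ m, pmt m (s' m) (s m) a) * μSA t s a)
    (hsa : ∀ t s a, μSA t s a = ∑ o, μSOA t s o a)
    (hobs : ∀ t s o, ∑ a, μSOA t s o a = (∏ m, pmo m (o m) (s m)) * μS t s)
    (hinit : ∀ s, μS 1 s = ∏ m, pm1 m (s m))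
    (τS : ℕ → (m : Fin M) → S m → ℝ)
    (τSA : ℕ → (m : Fin M) → S m → A → ℝ)
    (τSOA : ℕ → (m : Fin M) → S m → O m → A → ℝ)
    (τA : ℕ → A → ℝ)
    (hτS : ∀ t m x, τS t m x
        = ∑ s ∈ Finset.univ.filter (fun s : (∀ m, S m) => s m = x), μS t s)
    (hτSA : ∀ t m x a, τSA t m x a
        = ∑ s ∈ Finset.univ.filter (fun s : (∀ m, S m) => s m = x), μSA t s a)
    (hτSOA : ∀ t m x o a, τSOA t m x o a
        = ∑ s ∈ Finset.univ.filter (fun s : (∀ m, S m) => s m = x),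
            ∑ ob ∈ Finset.univ.filter (fun ob : (∀ m, O m) => ob m = o),
              μSOA t s ob a)
    (hτA : ∀ t a, τA t a = ∑ s, μSA t s a) :
    (∀ t (m : Fin M) (x' : S m), τS (t + 1) m x'
        = ∑ x, ∑ a, pmt m x' x a * τSA t m x a) ∧
    (∀ t (m : Fin M) (x : S m) (a : A), τSA t m x a = ∑ o, τSOA t m x o a) ∧
    (∀ t (m : Fin M) (a : A), ∑ x, τSA t m x a = τA t a) ∧
    (∀ t (m : Fin M) (x : S m) (o : O m),
        ∑ a, τSOA t m x o a = pmo m o x * τS t m x) ∧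
    (∀ (m : Fin M) (x : S m), τS 1 m x = pm1 m x) := by
  classical
  refine ⟨?_, ?_, ?_, ?_, ?_⟩
  · -- flow
    intro t m x'
    rw [hτS]
    calc ∑ s' ∈ Finset.univ.filter (fun s' : (∀ m, S m) => s' m = x'), μS (t + 1) s'
        = ∑ s' ∈ Finset.univ.filter (fun s' : (∀ m, S m) => s' m = x'),
            ∑ s, ∑ a, (∏ m', pmt m' (s' m') (s m') a) * μSA t s a :=
          Finset.sum_congr rfl fun s' _ => hflow t s'
      _ = ∑ s, ∑ a, (∑ s' ∈ Finset.univ.filter (fun s' : (∀ m, S m) => s' m = x'),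
            ∏ m', pmt m' (s' m') (s m') a) * μSA t s a := by
          rw [Finset.sum_comm]
          exact Finset.sum_congr rfl fun s _ => by
            rw [Finset.sum_comm]
            exact Finset.sum_congr rfl fun a _ => (Finset.sum_mul _ _ _).symm
      _ = ∑ s, ∑ a, pmt m x' (s m) a * μSA t s a := by
          refine Finset.sum_congr rfl fun s _ => Finset.sum_congr rfl fun a _ => ?_
          rw [fiber_prod_sum (fun m' y => pmt m' y (s m') a) m x'
            (fun m' _ => hpmt1 m' (s m') a)]
      _ = ∑ x, ∑ a, pmt m x' x a * τSA t m x a := by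
          rw [Finset.sum_comm]
          conv_rhs => rw [Finset.sum_comm]
          refine Finset.sum_congr rfl fun a _ => ?_
          rw [← Finset.sum_fiberwise Finset.univ (fun s : (∀ m, S m) => s m)
            (fun s => pmt m x' (s m) a * μSA t s a)]
          refine Finset.sum_congr rfl fun x _ => ?_
          rw [hτSA, Finset.mul_sum]
          refine Finset.sum_congr rfl fun s hs => ?_
          rw [(Finset.mem_filter.1 hs).2]
  · -- sa
    intro t m x a
    rw [hτSA]
    calc ∑ s ∈ Finset.univ.filter (fun s : (∀ m, S m) => s m = x), μSA t s a
        = ∑ s ∈ Finset.univ.filter (fun s : (∀ m, S m) => s m = x),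
            ∑ ob, μSOA t s ob a := Finset.sum_congr rfl fun s _ => hsa t s a
      _ = ∑ o, τSOA t m x o a := by
          simp_rw [hτSOA]
          conv_rhs => rw [Finset.sum_comm]
          refine Finset.sum_congr rfl fun s _ => ?_
          exact (Finset.sum_fiberwise Finset.univ (fun ob : (∀ m, O m) => ob m)
            (fun ob => μSOA t s ob a)).symm
  · -- A marginal
    intro t m a
    simp_rw [hτSA, hτA]
    exact Finset.sum_fiberwise Finset.univ (fun s : (∀ m, S m) => s m)
      (fun s => μSA t s a)
  · -- obs
    intro t m x o
    simp_rw [hτSOA, hτS]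
    rw [Finset.sum_comm]
    rw [Finset.mul_sum]
    refine Finset.sum_congr rfl fun s hs => ?_
    rw [Finset.sum_comm]
    calc ∑ ob ∈ Finset.univ.filter (fun ob : (∀ m, O m) => ob m = o), ∑ a, μSOA t s ob a
        = ∑ ob ∈ Finset.univ.filter (fun ob : (∀ m, O m) => ob m = o),
            (∏ m', pmo m' (ob m') (s m')) * μS t s :=
          Finset.sum_congr rfl fun ob _ => hobs t s ob
      _ = (∑ ob ∈ Finset.univ.filter (fun ob : (∀ m, O m) => ob m = o),
            ∏ m', pmo m' (ob m') (s m')) * μS t s := (Finset.sum_mul _ _ _).symm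
      _ = pmo m o x * μS t s := by
          rw [fiber_prod_sum (fun m' y => pmo m' y (s m')) m o
            (fun m' _ => hpmo1 m' (s m')), (Finset.mem_filter.1 hs).2]
  · -- init
    intro m x
    rw [hτS]
    calc ∑ s ∈ Finset.univ.filter (fun s : (∀ m, S m) => s m = x), μS 1 s
        = ∑ s ∈ Finset.univ.filter (fun s : (∀ m, S m) => s m = x),
            ∏ m', pm1 m' (s m') := Finset.sum_congr rfl fun s _ => hinit s
      _ = pm1 m x := fiber_prod_sum pm1 m x (fun m' _ => hpm11 m')
end

section
/- Under the factorized probabilities of a decomposable POMDP and the component marginals τ defined from an exact feasible solution μ as above, the objective values coincide: ∑_t ∑_{s,s',a} r(s,a,s')·p(s'|s,a)·μ^t_{sa} = ∑_t ∑_m ∑_{s_m,s'_m,a} r_m(s_m,a,s'_m)·p_m(s'_m|s_m,a)·τ^{t,m}_{s_m a}, where r(s,a,s') = ∑_m r_m(s_m, a, s'_m) and p(s'|s,a) = ∏_m p_m(s'_m|s_m,a). -/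
open Finset

lemma key {M : ℕ} (S : Fin M → Type*) [∀ m, Fintype (S m)] [∀ m, DecidableEq (S m)]
    (f : (m : Fin M) → S m → ℝ) (p : (m : Fin M) → S m → ℝ)
    (hp : ∀ m, ∑ x, p m x = 1) :
    ∑ s' : ∀ m, S m, (∑ m, f m (s' m)) * ∏ m, p m (s' m)
      = ∑ m, ∑ x', f m x' * p m x' := by
  simp only [Finset.sum_mul]
  rw [Finset.sum_comm]
  refine Finset.sum_congr rfl fun m _ => ?_
  have hg : ∀ s' : ∀ m, S m, f m (s' m) * ∏ j, p j (s' j)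
      = ∏ j, (if h : j = m then f m (h ▸ s' j) else 1) * p j (s' j) := by
    intro s'
    rw [Finset.prod_mul_distrib]
    congr 1
    rw [Finset.prod_eq_single m (fun j _ hj => dif_neg hj) (by simp)]
    simp
  simp only [hg]
  rw [← Fintype.piFinset_univ, ← Finset.prod_univ_sum (t := fun _ => Finset.univ) (f := fun j y => (if h : j = m then f m (h ▸ y) else 1) * p j y)]
  rw [Finset.prod_eq_single m (fun j _ hj => by simp [dif_neg hj, hp j]) (by simp)]
  simp

theorem stmt8 {M : ℕ} (S : Fin M → Type*) (A : Type*)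
    [∀ m, Fintype (S m)] [Fintype A] [∀ m, DecidableEq (S m)]
    (T : ℕ)
    (r : (m : Fin M) → S m → A → S m → ℝ)
    (pmt : (m : Fin M) → S m → S m → A → ℝ)
    (hpmt0 : ∀ m x' x a, 0 ≤ pmt m x' x a)
    (hpmt1 : ∀ m x a, ∑ x', pmt m x' x a = 1)
    (μSA : ℕ → (∀ m, S m) → A → ℝ)
    (hpos : ∀ t s a, 0 ≤ μSA t s a)
    (τSA : ℕ → (m : Fin M) → S m → A → ℝ)
    (hτSA : ∀ t m x a, τSA t m x a
        = ∑ s ∈ Finset.univ.filter (fun s : (∀ m, S m) => s m = x), μSA t s a) :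
    ∑ t ∈ Finset.Icc 1 T, ∑ s : (∀ m, S m), ∑ s' : (∀ m, S m), ∑ a : A,
        (∑ m, r m (s m) a (s' m)) * (∏ m, pmt m (s' m) (s m) a) * μSA t s a
      = ∑ t ∈ Finset.Icc 1 T, ∑ m : Fin M, ∑ x : S m, ∑ x' : S m, ∑ a : A,
          r m x a x' * pmt m x' x a * τSA t m x a := by
  refine Finset.sum_congr rfl fun t _ => ?_
  -- RHS: plug τ, pull sums, fiberwise
  have rhs : ∑ m : Fin M, ∑ x : S m, ∑ x' : S m, ∑ a : A,
      r m x a x' * pmt m x' x a * τSA t m x a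
    = ∑ s : (∀ m, S m), ∑ a : A,
        (∑ m, ∑ x', r m (s m) a x' * pmt m x' (s m) a) * μSA t s a := by
    simp only [hτSA, Finset.mul_sum]
    have hm : ∀ m : Fin M, ∑ x : S m, ∑ x' : S m, ∑ a : A,
        ∑ s ∈ Finset.univ.filter (fun s : (∀ m, S m) => s m = x),
          r m x a x' * pmt m x' x a * μSA t s a
      = ∑ s : (∀ m, S m), ∑ a : A,
          (∑ x', r m (s m) a x' * pmt m x' (s m) a) * μSA t s a := by
      intro m
      rw [← Finset.sum_fiberwise Finset.univ (fun s : (∀ m, S m) => s m)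
        (fun s => ∑ a : A, (∑ x', r m (s m) a x' * pmt m x' (s m) a) * μSA t s a)]
      refine Finset.sum_congr rfl fun x _ => ?_
      rw [Finset.sum_comm]
      conv_lhs => enter [2, a]; rw [Finset.sum_comm]
      rw [Finset.sum_comm]
      refine Finset.sum_congr rfl fun sfib hs => ?_
      simp only [Finset.mem_filter] at hs
      refine Finset.sum_congr rfl fun a _ => ?_
      rw [← Finset.sum_mul]
      simp [hs.2]
    simp only [hm]
    rw [Finset.sum_comm]
    refine Finset.sum_congr rfl fun s _ => ?_
    rw [Finset.sum_comm]
    refine Finset.sum_congr rfl fun a _ => ?_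
    rw [← Finset.sum_mul]
  rw [rhs]
  refine Finset.sum_congr rfl fun s _ => ?_
  rw [Finset.sum_comm]
  refine Finset.sum_congr rfl fun a _ => ?_
  rw [← Finset.sum_mul]
  congr 1
  exact key S (fun m x' => r m (s m) a x') (fun m x' => pmt m x' (s m) a)
    (fun m => hpmt1 m (s m) a)
end
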